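/- Let Ψ be a nonzero vector of ℂ² ⊗ ℂ² with coefficient matrix C(Ψ). If rank C(Ψ) = 1, then there exist invertible linear maps F¹, F² on ℂ² with (F¹ ⊗ F²)(Ψ) = e₁ ⊗ e₁; if rank C(Ψ) = 2, then there exist invertible linear maps F¹, F² on ℂ² with (F¹ ⊗ F²)(Ψ) = e₁ ⊗ e₁ + e₂ ⊗ e₂. Moreover, there exist no invertible linear maps F¹, F² on ℂ² with (F¹ ⊗ F²)(e₁ ⊗ e₁) = e₁ ⊗ e₁ + e₂ ⊗ e₂. -/

import Mathlib

open scoped TensorProduct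

/-- The coefficient matrix of a vector `Ψ ∈ ℂ^m ⊗ ℂ^n` in the standard product basis. -/
noncomputable def coeffMat (m n : ℕ) (Ψ : (Fin m → ℂ) ⊗[ℂ] (Fin n → ℂ)) :
    Matrix (Fin m) (Fin n) ℂ :=
  Matrix.of fun i j =>
    (((Pi.basisFun ℂ (Fin m)).tensorProduct (Pi.basisFun ℂ (Fin n))).repr Ψ) (i, j)

/-- The standard basis vectors of `ℂ²` (`e 0 = e₁`, `e 1 = e₂`). -/
noncomputable def e (i : Fin 2) : Fin 2 → ℂ := Pi.single i 1

lemma coeffMat_tmul (m n : ℕ) (x : Fin m → ℂ) (y : Fin n → ℂ) (i : Fin m) (j : Fin n) :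
    coeffMat m n (x ⊗ₜ[ℂ] y) i j = x i * y j := by
  simp [coeffMat, Module.Basis.tensorProduct_repr_tmul_apply]
  ring

lemma coeffMat_inj {m n : ℕ} {Ψ Φ : (Fin m → ℂ) ⊗[ℂ] (Fin n → ℂ)}
    (h : coeffMat m n Ψ = coeffMat m n Φ) : Ψ = Φ := by
  apply ((Pi.basisFun ℂ (Fin m)).tensorProduct (Pi.basisFun ℂ (Fin n))).repr.injective
  ext ⟨i, j⟩
  exact Matrix.ext_iff.mpr h i j

lemma coeffMat_map (f g : (Fin 2 → ℂ) →ₗ[ℂ] (Fin 2 → ℂ)) (Ψ : (Fin 2 → ℂ) ⊗[ℂ] (Fin 2 → ℂ)) :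
    coeffMat 2 2 (TensorProduct.map f g Ψ)
      = LinearMap.toMatrix' f * coeffMat 2 2 Ψ * (LinearMap.toMatrix' g).transpose := by
  induction Ψ using TensorProduct.induction_on with
  | zero =>
      have : coeffMat 2 2 (0 : (Fin 2 → ℂ) ⊗[ℂ] (Fin 2 → ℂ)) = 0 := by
        ext i j; simp [coeffMat]
      simp [this]
  | tmul x y =>
      ext i j
      rw [TensorProduct.map_tmul, coeffMat_tmul]
      have hf : f x = (LinearMap.toMatrix' f).mulVec x := by
        rw [← Matrix.toLin'_apply, Matrix.toLin'_toMatrix']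
      have hg : g y = (LinearMap.toMatrix' g).mulVec y := by
        rw [← Matrix.toLin'_apply, Matrix.toLin'_toMatrix']
      rw [hf, hg]
      simp only [Matrix.mulVec, dotProduct, Matrix.mul_apply, Matrix.transpose_apply]
      rw [Finset.sum_mul_sum]
      rw [Finset.sum_comm]
      congr 1; ext l
      rw [Finset.sum_mul]
      congr 1; ext k
      rw [coeffMat_tmul]; ring
  | add a b ha hb =>
      have hadd : coeffMat 2 2 (TensorProduct.map f g a + TensorProduct.map f g b)
          = coeffMat 2 2 (TensorProduct.map f g a) + coeffMat 2 2 (TensorProduct.map f g b) := by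
        ext i j; simp [coeffMat]
      have hadd2 : coeffMat 2 2 (a + b) = coeffMat 2 2 a + coeffMat 2 2 b := by
        ext i j; simp [coeffMat]
      rw [map_add, hadd, ha, hb, hadd2]
      noncomm_ring

lemma exists_equiv_to_e0 (u : Fin 2 → ℂ) (hu : u ≠ 0) :
    ∃ F : (Fin 2 → ℂ) ≃ₗ[ℂ] (Fin 2 → ℂ), F u = e 0 := by
  have hu' : u 0 ≠ 0 ∨ u 1 ≠ 0 := by
    by_contra h
    push_neg at h
    apply hu; ext i; fin_cases i <;> simp [h.1, h.2]
  rcases hu' with h | h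
  · set A : Matrix (Fin 2) (Fin 2) ℂ := !![(u 0)⁻¹, 0; -(u 1)/(u 0), 1] with hA
    have hdet : IsUnit A.det := by
      simp [hA, Matrix.det_fin_two_of, h]
    refine ⟨A.toLinearEquiv' (A.invertibleOfIsUnitDet hdet), ?_⟩
    show Matrix.toLin' A u = e 0
    rw [Matrix.toLin'_apply]
    ext i
    fin_cases i <;>
      simp [hA, Matrix.mulVec, dotProduct, e, Fin.sum_univ_two] <;>
      field_simp <;>
      ring
  · set A : Matrix (Fin 2) (Fin 2) ℂ := !![0, (u 1)⁻¹; 1, -(u 0)/(u 1)] with hA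
    have hdet : IsUnit A.det := by
      simp [hA, Matrix.det_fin_two_of, h]
    refine ⟨A.toLinearEquiv' (A.invertibleOfIsUnitDet hdet), ?_⟩
    show Matrix.toLin' A u = e 0
    rw [Matrix.toLin'_apply]
    ext i
    fin_cases i <;>
      simp [hA, Matrix.mulVec, dotProduct, e, Fin.sum_univ_two] <;>
      field_simp <;>
      ring

lemma coeffMat_add {m n : ℕ} (Ψ Φ : (Fin m → ℂ) ⊗[ℂ] (Fin n → ℂ)) :
    coeffMat m n (Ψ + Φ) = coeffMat m n Ψ + coeffMat m n Φ := by
  ext i j; simp [coeffMat]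

lemma coeffMat_target (i j : Fin 2) :
    coeffMat 2 2 (e 0 ⊗ₜ[ℂ] e 0 + e 1 ⊗ₜ[ℂ] e 1) i j
      = (1 : Matrix (Fin 2) (Fin 2) ℂ) i j := by
  rw [coeffMat_add]
  have h1 := coeffMat_tmul 2 2 (e 0) (e 0) i j
  have h2 := coeffMat_tmul 2 2 (e 1) (e 1) i j
  rw [Matrix.add_apply, h1, h2]
  fin_cases i <;> fin_cases j <;> simp [e, Matrix.one_apply]

theorem two_qubit_slocc_classification (Ψ : (Fin 2 → ℂ) ⊗[ℂ] (Fin 2 → ℂ)) (hΨ : Ψ ≠ 0) :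
    ((coeffMat 2 2 Ψ).rank = 1 →
      ∃ F1 F2 : (Fin 2 → ℂ) ≃ₗ[ℂ] (Fin 2 → ℂ),
        TensorProduct.map F1.toLinearMap F2.toLinearMap Ψ = e 0 ⊗ₜ[ℂ] e 0) ∧
    ((coeffMat 2 2 Ψ).rank = 2 →
      ∃ F1 F2 : (Fin 2 → ℂ) ≃ₗ[ℂ] (Fin 2 → ℂ),
        TensorProduct.map F1.toLinearMap F2.toLinearMap Ψ
          = e 0 ⊗ₜ[ℂ] e 0 + e 1 ⊗ₜ[ℂ] e 1) ∧
    (¬ ∃ F1 F2 : (Fin 2 → ℂ) ≃ₗ[ℂ] (Fin 2 → ℂ),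
        TensorProduct.map F1.toLinearMap F2.toLinearMap (e 0 ⊗ₜ[ℂ] e 0)
          = e 0 ⊗ₜ[ℂ] e 0 + e 1 ⊗ₜ[ℂ] e 1) := by
  refine ⟨?_, ?_, ?_⟩
  · intro h1
    obtain ⟨C, hCdef⟩ : ∃ C, coeffMat 2 2 Ψ = C := ⟨_, rfl⟩
    rw [hCdef] at h1
    have hCne : C ≠ 0 := by
      intro h0; rw [h0, Matrix.rank_zero] at h1; exact absurd h1 (by norm_num)
    have hdet : C.det = 0 := by
      by_contra hd
      have := Matrix.rank_of_isUnit C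
        ((Matrix.isUnit_iff_isUnit_det C).mpr (isUnit_iff_ne_zero.mpr hd))
      rw [this] at h1
      simp at h1
    obtain ⟨a, b, hab⟩ : ∃ a b, C a b ≠ 0 := by
      by_contra hc; push_neg at hc
      exact hCne (by ext i j; simp [hc])
    have hd2 : C 0 0 * C 1 1 - C 0 1 * C 1 0 = 0 := by
      rw [← Matrix.det_fin_two]; exact hdet
    have e1 : C 0 0 * C 1 1 = C 0 1 * C 1 0 := sub_eq_zero.mp hd2
    have e2 := e1.symm
    have e3 : C 1 0 * C 0 1 = C 1 1 * C 0 0 := by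
      rw [mul_comm, mul_comm (C 1 1)]; exact e2
    have e4 := e3.symm
    have key : ∀ i j a' b' : Fin 2, C i j * C a' b' = C i b' * C a' j := by
      simp only [Fin.forall_fin_two]
      refine ⟨⟨⟨⟨?_,?_⟩,?_,?_⟩,⟨?_,?_⟩,?_,?_⟩,⟨⟨?_,?_⟩,?_,?_⟩,⟨?_,?_⟩,?_,?_⟩ <;>
        first
          | trivial
          | ring1
          | exact e1
          | exact e2
          | exact e3
          | exact e4
    set u : Fin 2 → ℂ := fun i => C i b with hu
    set v : Fin 2 → ℂ := fun j => C a j / C a b with hv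
    have hCuv : ∀ i j, C i j = u i * v j := by
      intro i j
      rw [hu, hv]
      show C i j = C i b * (C a j / C a b)
      rw [mul_div_assoc', ← key i j a b, mul_div_assoc, div_self hab, mul_one]
    have hΨuv : Ψ = u ⊗ₜ[ℂ] v := by
      apply coeffMat_inj
      ext i j
      rw [coeffMat_tmul, hCdef]
      exact hCuv i j
    have hune : u ≠ 0 := by
      intro h; exact hab (by simpa [hu] using congrFun h a)
    have hvne : v ≠ 0 := by
      intro h
      have := congrFun h b
      simp [hv, hab] at this
    obtain ⟨F1, hF1⟩ := exists_equiv_to_e0 u hune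
    obtain ⟨F2, hF2⟩ := exists_equiv_to_e0 v hvne
    refine ⟨F1, F2, ?_⟩
    rw [hΨuv, TensorProduct.map_tmul]
    simp [hF1, hF2]
  · intro h2
    set C := coeffMat 2 2 Ψ with hCdef
    have hfr : Module.finrank ℂ (LinearMap.range C.mulVecLin) = 2 := h2
    have htop : LinearMap.range C.mulVecLin = ⊤ := by
      apply Submodule.eq_top_of_finrank_eq
      rw [hfr]
      simp [Module.finrank_fintype_fun_eq_card]
    have hsurj : Function.Surjective C.mulVec := by
      intro y
      have hy : y ∈ LinearMap.range C.mulVecLin := htop ▸ Submodule.mem_top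
      obtain ⟨x, hx⟩ := hy
      exact ⟨x, hx⟩
    have hunit : IsUnit C := Matrix.mulVec_surjective_iff_isUnit.mp hsurj
    letI hinv : Invertible C :=
      C.invertibleOfIsUnitDet ((Matrix.isUnit_iff_isUnit_det C).mp hunit)
    refine ⟨(C.toLinearEquiv' hinv).symm, LinearEquiv.refl ℂ _, ?_⟩
    apply coeffMat_inj
    rw [coeffMat_map]
    have h1m : LinearMap.toMatrix' ((C.toLinearEquiv' hinv).symm).toLinearMap = ⅟C := by
      have h := Matrix.toLinearEquiv'_symm_apply C hinv
      rw [show (((C.toLinearEquiv' hinv).symm).toLinearMap) = Matrix.toLin' (⅟C) from h,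
        LinearMap.toMatrix'_toLin']
    have h2m : LinearMap.toMatrix' (LinearEquiv.refl ℂ (Fin 2 → ℂ)).toLinearMap
        = (1 : Matrix (Fin 2) (Fin 2) ℂ) := by
      rw [LinearEquiv.refl_toLinearMap, LinearMap.toMatrix'_id]
    rw [h1m, h2m]
    ext i j
    rw [coeffMat_target]
    simp [← hCdef, invOf_mul_self, Matrix.inv_mul_of_invertible]
  · rintro ⟨F1, F2, hF⟩
    rw [TensorProduct.map_tmul] at hF
    have h00 := Matrix.ext_iff.mpr (congrArg (coeffMat 2 2) hF) 0 0
    have h01 := Matrix.ext_iff.mpr (congrArg (coeffMat 2 2) hF) 0 1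
    have h11 := Matrix.ext_iff.mpr (congrArg (coeffMat 2 2) hF) 1 1
    rw [coeffMat_tmul, coeffMat_target] at h00 h01 h11
    simp [Matrix.one_apply] at h00 h01 h11
    rcases h01 with h | h
    · rw [h, zero_mul] at h00; exact zero_ne_one h00
    · rw [h, mul_zero] at h11; exact zero_ne_one h11
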